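/- For every k ≥ 0: for each integer i with 1 ≤ i ≤ ⌊k/2⌋, the square (2i ⊕ W_{k-2i})² (of period |W_{k-2i}| = f_{k-2i+2}) is a factor of W_{k+1} but is not a factor of W_k; moreover, every square factor of W_{k+1} that is not a factor of W_k equals (2i ⊕ W_{k-2i})² for some i with 1 ≤ i ≤ ⌊k/2⌋. -/

import Mathlib

/-- The morphism `phi` on the alphabet `ℕ`: `phi (2i) = (2i)(2i+1)` and `phi (2i+1) = (2i+2)`. -/
def phi (a : ℕ) : List ℕ := if a % 2 = 0 then [a, a + 1] else [a + 1]

/-- The finite ZWW words: `W n = phi^n(0)`, so `W 0 = 0`, `W 1 = 01`, `W 2 = 012`, `W 3 = 01223`. -/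
def W (n : ℕ) : List ℕ := (fun w => w.flatMap phi)^[n] [0]

/-!
Write `Wconcat m = W 0 W 1 ⋯ W (m - 1)`; then `W (n + 1) = 0 1 (2 ⊕ Wconcat n)`. In `Wconcat m`
the letter `0` occurs exactly at the starts of the blocks `W a`, whose lengths `f (a + 2)` are
distinct. So in a square `u u` with `0 ∈ u` each copy of `u` holds exactly one `0`, these two
zeros start consecutive blocks, and comparing last letters of blocks forces `u = W a`. A square
avoiding `0` lies in the tail `1 (2 ⊕ Wconcat (a - 1))` of one block, hence is the `2 ⊕`-shift of
a square of `Wconcat (m - 2)`. Iterating, the square roots in `Wconcat m` are the words `2j ⊕ W b`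
with `b + 2j + 2 ≤ m`, so those in `W n` are the `2i ⊕ W b` with `i ≥ 1` and `b + 2i + 1 ≤ n`,
and the new ones in `W (k + 1)` have `b + 2i = k`.
-/

namespace List

variable {α β : Type*}

lemma exists_eq_append_cons_notMem {a : α} {l : List α} (h : a ∈ l) :
    ∃ s t, l = s ++ a :: t ∧ a ∉ s := by
  induction l with
  | nil => simp at h
  | cons b l ih =>
    by_cases hb : b = a
    · exact ⟨[], l, by rw [hb]; rfl, not_mem_nil⟩
    · obtain ⟨s, t, rfl, hs⟩ := ih ((mem_cons.mp h).resolve_left (Ne.symm hb))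
      exact ⟨b :: s, t, rfl, by simp [hs, Ne.symm hb]⟩

lemma infix_or_infix_of_infix_append_cons {u x y : List α} {a : α}
    (h : u <:+: x ++ a :: y) (ha : a ∉ u) : u <:+: x ∨ u <:+: y := by
  obtain ⟨s, t, h⟩ := h
  rw [append_assoc, append_eq_append_iff] at h
  rcases h with ⟨x', rfl, h⟩ | ⟨s', rfl, h⟩
  · rcases append_eq_append_iff.mp h with ⟨u', rfl, -⟩ | ⟨_ | ⟨b, c⟩, rfl, hc⟩
    · exact .inl ⟨s, u', by simp⟩
    · exact .inl ⟨s, [], by simp⟩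
    · obtain ⟨rfl, -⟩ := cons_eq_cons.mp hc
      simp at ha
  · rcases s' with _ | ⟨b, s'⟩
    · rcases u with _ | ⟨b, u⟩
      · exact .inl nil_infix
      · obtain ⟨rfl, -⟩ := cons_eq_cons.mp h
        simp at ha
    · obtain ⟨-, rfl⟩ := cons_eq_cons.mp h
      exact .inr ⟨s', t, by simp⟩

lemma notMem_of_append_self_sublist {u l : List α} {a : α} [BEq α] [LawfulBEq α]
    (h : u ++ u <+ l) (hl : l.count a ≤ 1) : a ∉ u := by
  intro ha
  have := h.count_le a
  have := count_pos_iff.mpr ha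
  rw [count_append] at *
  omega

lemma eq_nil_of_append_self_infix_singleton {u : List α} {a : α} (h : u ++ u <:+: [a]) :
    u = [] := by
  have h₁ : (u ++ u).length ≤ 1 := h.length_le
  rw [length_append] at h₁
  exact length_eq_zero_iff.mp (by omega)

lemma infix_of_infix_cons_of_notMem {u l : List α} {a : α} (h : u <:+: a :: l) (ha : a ∉ u) :
    u <:+: l :=
  (infix_or_infix_of_infix_append_cons (x := []) h ha).elim (fun h => infix_nil.mp h ▸ nil_infix) id

lemma append_self_infix_map_iff {f : α → β} (hf : Function.Injective f) {u : List β}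
    {l : List α} : u ++ u <:+: l.map f ↔ ∃ v, v ++ v <:+: l ∧ u = v.map f := by
  refine ⟨fun h => ?_, fun ⟨v, hv, hu⟩ => hu ▸ map_append (f := f) ▸ hv.map f⟩
  obtain ⟨w, hw, huw⟩ := infix_map_iff.mp h
  obtain ⟨v, v', rfl, hv, hv'⟩ := map_eq_append_iff.mp huw.symm
  obtain rfl := map_injective_iff.mpr hf (hv.trans hv'.symm)
  exact ⟨v, hw, hv.symm⟩

end List

open List

lemma W_succ (n : ℕ) : W (n + 1) = (W n).flatMap phi := by
  simp only [W, Function.iterate_succ_apply']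

def Wconcat (n : ℕ) : List ℕ := (range n).flatMap W

lemma Wconcat_zero : Wconcat 0 = [] := rfl

lemma Wconcat_succ (n : ℕ) : Wconcat (n + 1) = Wconcat n ++ W n := by
  simp [Wconcat, range_succ]

lemma Wconcat_prefix_Wconcat {m n : ℕ} (h : m ≤ n) : Wconcat m <+: Wconcat n := by
  induction n, h using Nat.le_induction with
  | base => exact prefix_refl _
  | succ n _ ih => exact ih.trans ⟨W n, (Wconcat_succ n).symm⟩

lemma phi_add_two (a : ℕ) : phi (a + 2) = (phi a).map (· + 2) := by
  unfold phi
  split_ifs <;> simp_all [Nat.add_mod_right]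

lemma flatMap_phi_map_add_two (l : List ℕ) :
    (l.map (· + 2)).flatMap phi = (l.flatMap phi).map (· + 2) := by
  induction l with
  | nil => rfl
  | cons a l ih => simp [ih, phi_add_two]

lemma Wconcat_succ_eq_zero_cons (n : ℕ) : Wconcat (n + 1) = 0 :: (Wconcat n).flatMap phi := by
  induction n with
  | zero => rfl
  | succ n ih =>
    conv_lhs => rw [Wconcat_succ, ih]
    rw [W_succ, Wconcat_succ n, flatMap_append, cons_append]

lemma W_succ' (n : ℕ) : W (n + 1) = 0 :: 1 :: (Wconcat n).map (· + 2) := by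
  induction n with
  | zero => rfl
  | succ n ih =>
    rw [W_succ, ih, Wconcat_succ_eq_zero_cons]
    simp [phi, flatMap_phi_map_add_two]

lemma W_add_two (n : ℕ) : W (n + 2) = W (n + 1) ++ (W n).map (· + 2) := by
  rw [W_succ', W_succ', Wconcat_succ]
  simp

lemma length_W (n : ℕ) : (W n).length = Nat.fib (n + 2) := by
  induction n using Nat.twoStepInduction with
  | zero => rfl
  | one => rfl
  | more n ih₀ ih₁ =>
    rw [W_add_two, length_append, length_map, ih₀, ih₁, Nat.fib_add_two (n := n + 2), add_comm]

lemma W_injective : Function.Injective W := fun _ _ h =>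
  Nat.fib_add_two_strictMono.injective (by simpa [length_W] using congrArg length h)

lemma W_prefix_W_succ (n : ℕ) : W n <+: W (n + 1) := by
  cases n with
  | zero => exact ⟨[1], rfl⟩
  | succ n => exact ⟨_, (W_add_two n).symm⟩

lemma getLast?_W (n : ℕ) : (W n).getLast? = some n := by
  induction n using Nat.twoStepInduction with
  | zero => rfl
  | one => rfl
  | more n ih₀ _ => simp [W_add_two, getLast?_map, ih₀]

lemma getLast?_Wconcat_succ (n : ℕ) : (Wconcat (n + 1)).getLast? = some n := by
  simp [Wconcat_succ, getLast?_W]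

lemma W_eq_zero_cons (n : ℕ) : ∃ t, W n = 0 :: t ∧ 0 ∉ t := by
  cases n with
  | zero => exact ⟨[], rfl, not_mem_nil⟩
  | succ n => exact ⟨_, W_succ' n, by simp⟩

lemma W_ne_nil (n : ℕ) : W n ≠ [] := by
  obtain ⟨t, ht, -⟩ := W_eq_zero_cons n
  simp [ht]

lemma count_zero_Wconcat (n : ℕ) : (Wconcat n).count 0 = n := by
  induction n with
  | zero => rfl
  | succ n ih =>
    obtain ⟨t, ht, h0⟩ := W_eq_zero_cons n
    simp [Wconcat_succ, ht, ih, count_eq_zero_of_not_mem h0]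

lemma Wconcat_injective : Function.Injective Wconcat := fun m n h => by
  simpa [count_zero_Wconcat] using congrArg (count 0) h

lemma exists_Wconcat_eq_of_append_zero_cons {s r : List ℕ} {n : ℕ}
    (h : s ++ 0 :: r = Wconcat n) : ∃ a < n, s = Wconcat a := by
  induction n generalizing r with
  | zero => simp [Wconcat_zero] at h
  | succ n ih =>
    obtain ⟨t, ht, h0⟩ := W_eq_zero_cons n
    rw [Wconcat_succ, ht, append_eq_append_iff] at h
    rcases h with ⟨_ | ⟨b, s'⟩, hs, h⟩ | ⟨_ | ⟨b, c⟩, hs, h⟩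
    · exact ⟨n, n.lt_succ_self, by simpa using hs.symm⟩
    · obtain ⟨rfl, -⟩ := cons_eq_cons.mp h
      obtain ⟨a, ha, rfl⟩ := ih hs.symm
      exact ⟨a, by omega, rfl⟩
    · exact ⟨n, n.lt_succ_self, by simpa using hs⟩
    · obtain ⟨rfl, rfl⟩ := cons_eq_cons.mp h
      simp at h0

lemma zero_cons_eq_W {a n : ℕ} {w r : List ℕ} (h : Wconcat a ++ 0 :: w ++ 0 :: r = Wconcat n)
    (hw : 0 ∉ w) : 0 :: w = W a := by
  obtain ⟨c, -, hc⟩ := exists_Wconcat_eq_of_append_zero_cons h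
  have hca : c = a + 1 := by
    simpa [count_zero_Wconcat, count_eq_zero_of_not_mem hw] using congrArg (count 0) hc.symm
  rw [hca, Wconcat_succ] at hc
  exact append_cancel_left hc

lemma eq_W_of_append_self_infix_Wconcat {u : List ℕ} {n : ℕ} (h : u ++ u <:+: Wconcat n)
    (hu : 0 ∈ u) : ∃ a, a + 2 ≤ n ∧ u = W a := by
  obtain ⟨s, t, hst⟩ := h
  obtain ⟨p, q, rfl, hp⟩ := exists_eq_append_cons_notMem hu
  obtain ⟨a, -, hsa⟩ := exists_Wconcat_eq_of_append_zero_cons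
    (s := s ++ p) (r := q ++ p ++ 0 :: q ++ t) (by rw [← hst]; simp)
  by_cases hq : 0 ∈ q
  · exfalso
    obtain ⟨q₁, q₂, rfl, hq₁⟩ := exists_eq_append_cons_notMem hq
    have h₁ : 0 :: q₁ = W a := zero_cons_eq_W
      (n := n) (r := q₂ ++ p ++ 0 :: q₁ ++ 0 :: q₂ ++ t) (by rw [← hsa, ← hst]; simp) hq₁
    obtain ⟨c, -, hsc⟩ := exists_Wconcat_eq_of_append_zero_cons
      (s := s ++ p ++ 0 :: q₁ ++ 0 :: q₂ ++ p) (r := q₁ ++ 0 :: q₂ ++ t) (by rw [← hst]; simp)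
    have h₂ : 0 :: q₁ = W c := zero_cons_eq_W
      (n := n) (r := q₂ ++ t) (by rw [← hsc, ← hst]; simp) hq₁
    -- The blocks `W a` and `W c` found in the two copies of `u` have the same length.
    obtain rfl : a = c := W_injective (h₁.symm.trans h₂)
    simpa [← hsa] using congrArg length hsc
  · have hW : 0 :: q ++ p = W a := zero_cons_eq_W
      (n := n) (r := q ++ t) (by rw [← hsa, ← hst]; simp) (by simp [hp, hq])
    obtain rfl : p = [] := by
      by_contra hp'
      obtain ⟨p', x, rfl⟩ := (eq_nil_or_concat p).resolve_left hp'
      -- `x` would end both the block `W a` and the block before it, `W (a - 1)`.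
      have hxa : x = a := by simpa [getLast?_cons, getLast?_W] using congrArg getLast? hW
      obtain _ | a := a
      · simp [Wconcat_zero] at hsa
      · have : x = a := by simpa [getLast?_Wconcat_succ] using congrArg getLast? hsa
        omega
    obtain ⟨c, hc, hsc⟩ := exists_Wconcat_eq_of_append_zero_cons
      (s := s ++ 0 :: q) (r := q ++ t) (by rw [← hst]; simp)
    have hca : c = a + 1 := Wconcat_injective (by rw [← hsc, Wconcat_succ, ← hsa, ← hW]; simp)
    exact ⟨a, by omega, by simpa using hW⟩

lemma infix_tail_W_of_infix_Wconcat {u : List ℕ} {n : ℕ} (h : u <:+: Wconcat (n + 1))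
    (hu : 0 ∉ u) : u <:+: (W n).tail := by
  induction n with
  | zero => exact infix_of_infix_cons_of_notMem h hu
  | succ n ih =>
    obtain ⟨t, ht, -⟩ := W_eq_zero_cons (n + 1)
    rw [Wconcat_succ, ht] at h
    rcases infix_or_infix_of_infix_append_cons h hu with h | h
    · obtain ⟨d, hd⟩ := W_prefix_W_succ n
      obtain ⟨t', ht', -⟩ := W_eq_zero_cons n
      exact (ih h).trans ⟨[], d, by rw [← hd, ht']; rfl⟩
    · simpa [ht] using h

lemma append_self_infix_Wconcat_add_two_iff {u : List ℕ} {m : ℕ} (hu : u ≠ []) :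
    u ++ u <:+: Wconcat (m + 2) ↔
      (∃ a ≤ m, u = W a) ∨ ∃ v, v ++ v <:+: Wconcat m ∧ u = v.map (· + 2) := by
  have hmap : (Wconcat m).map (· + 2) <:+: Wconcat (m + 2) := by
    have h : W (m + 1) <:+: Wconcat (m + 2) := by rw [Wconcat_succ]; exact infix_append_right
    rw [W_succ'] at h
    exact (infix_cons (infix_cons infix_rfl)).trans h
  constructor
  · intro h
    by_cases h0 : 0 ∈ u
    · obtain ⟨a, ha, rfl⟩ := eq_W_of_append_self_infix_Wconcat h h0
      exact .inl ⟨a, by omega, rfl⟩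
    · refine .inr ((append_self_infix_map_iff (add_left_injective 2)).mp ?_)
      have h' := infix_tail_W_of_infix_Wconcat h (by simpa using h0)
      rw [W_succ', tail_cons] at h'
      have h1 : 1 ∉ u := notMem_of_append_self_sublist h'.sublist (by simp [count_eq_zero])
      exact infix_of_infix_cons_of_notMem h' (by simpa using h1)
  · rintro (⟨a, ha, rfl⟩ | ⟨v, hv, rfl⟩)
    · have : W a ++ W a <:+: Wconcat (a + 2) := by
        obtain ⟨d, hd⟩ := W_prefix_W_succ a
        exact ⟨Wconcat a, d, by simp [Wconcat_succ, ← hd]⟩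
      exact this.trans (Wconcat_prefix_Wconcat (by omega)).isInfix
    · exact (map_append (f := (· + 2)) ▸ hv.map _).trans hmap

lemma map_map_add_two (l : List ℕ) (j : ℕ) :
    (l.map (· + 2 * j)).map (· + 2) = l.map (· + 2 * (j + 1)) := by
  simp only [map_map, Function.comp_def]
  congr! 2

lemma append_self_infix_Wconcat_iff {u : List ℕ} (hu : u ≠ []) (m : ℕ) :
    u ++ u <:+: Wconcat m ↔ ∃ j b, b + 2 * j + 2 ≤ m ∧ u = (W b).map (· + 2 * j) := by
  induction m using Nat.strong_induction_on generalizing u with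
  | _ m ih =>
  match m with
  | 0 => simp [Wconcat_zero, hu]
  | 1 => exact iff_of_false (fun h => hu (eq_nil_of_append_self_infix_singleton h)) (by omega)
  | m + 2 =>
    rw [append_self_infix_Wconcat_add_two_iff hu]
    constructor
    · rintro (⟨a, ha, rfl⟩ | ⟨v, hv, rfl⟩)
      · exact ⟨0, a, by omega, by simp⟩
      · obtain ⟨j, b, hjb, rfl⟩ := (ih m (by omega) (by simpa using hu)).mp hv
        exact ⟨j + 1, b, by omega, map_map_add_two _ _⟩
    · rintro ⟨_ | j, b, hjb, rfl⟩
      · exact .inl ⟨b, by omega, by simp⟩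
      · refine .inr ⟨(W b).map (· + 2 * j), ?_, (map_map_add_two _ _).symm⟩
        exact (ih m (by omega) (by simp [W_ne_nil])).mpr ⟨j, b, by omega, rfl⟩

lemma append_self_infix_W_iff {u : List ℕ} (hu : u ≠ []) (n : ℕ) :
    u ++ u <:+: W n ↔ ∃ i b, 1 ≤ i ∧ b + 2 * i + 1 ≤ n ∧ u = (W b).map (· + 2 * i) := by
  cases n with
  | zero => exact iff_of_false (fun h => hu (eq_nil_of_append_self_infix_singleton h)) (by omega)
  | succ n =>
    have hpeel : u ++ u <:+: W (n + 1) ↔ u ++ u <:+: (Wconcat n).map (· + 2) := by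
      rw [W_succ']
      refine ⟨fun h => ?_, fun h => infix_cons (infix_cons h)⟩
      have h₀ : 0 ∉ u := notMem_of_append_self_sublist h.sublist (by simp [count_eq_zero])
      have h₁ : 1 ∉ u := notMem_of_append_self_sublist h.sublist (by simp [count_eq_zero])
      exact infix_of_infix_cons_of_notMem
        (infix_of_infix_cons_of_notMem h (by simpa using h₀)) (by simpa using h₁)
    rw [hpeel, append_self_infix_map_iff (add_left_injective 2)]
    constructor
    · rintro ⟨v, hv, rfl⟩
      obtain ⟨j, b, hjb, rfl⟩ := (append_self_infix_Wconcat_iff (by simpa using hu) n).mp hv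
      exact ⟨j + 1, b, by omega, by omega, map_map_add_two _ _⟩
    · rintro ⟨_ | j, b, hj, hjb, rfl⟩
      · omega
      · refine ⟨(W b).map (· + 2 * j), ?_, (map_map_add_two _ _).symm⟩
        exact (append_self_infix_Wconcat_iff (by simp [W_ne_nil]) n).mpr ⟨j, b, by omega, rfl⟩

lemma map_add_W_inj {i i' b b' : ℕ} :
    (W b).map (· + i) = (W b').map (· + i') ↔ i = i' ∧ b = b' := by
  refine ⟨fun h => ?_, by rintro ⟨rfl, rfl⟩; rfl⟩
  obtain ⟨t, ht, -⟩ := W_eq_zero_cons b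
  obtain ⟨t', ht', -⟩ := W_eq_zero_cons b'
  obtain rfl : i = i' := by simpa [ht, ht'] using congrArg head? h
  exact ⟨rfl, W_injective (map_injective_iff.mpr (add_left_injective i) h)⟩

/-- For every `k ≥ 0`: for each `1 ≤ i ≤ ⌊k/2⌋`, the square `(2i ⊕ W (k-2i))²`
(of period `|W (k-2i)| = f (k-2i+2)`) is a factor of `W (k+1)` but not of `W k`;
moreover every square factor of `W (k+1)` that is not a factor of `W k`
equals `(2i ⊕ W (k-2i))²` for some `1 ≤ i ≤ ⌊k/2⌋`. -/
theorem zww_new_squares : ∀ k : ℕ,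
    (∀ i : ℕ, 1 ≤ i → i ≤ k / 2 →
      (W (k - 2 * i)).length = Nat.fib (k - 2 * i + 2) ∧
      ((W (k - 2 * i)).map (· + 2 * i) ++ (W (k - 2 * i)).map (· + 2 * i)) <:+: W (k + 1) ∧
      ¬ ((W (k - 2 * i)).map (· + 2 * i) ++ (W (k - 2 * i)).map (· + 2 * i)) <:+: W k) ∧
    (∀ u : List ℕ, u ≠ [] → (u ++ u) <:+: W (k + 1) → ¬ (u ++ u) <:+: W k →
      ∃ i : ℕ, 1 ≤ i ∧ i ≤ k / 2 ∧
        u ++ u = (W (k - 2 * i)).map (· + 2 * i) ++ (W (k - 2 * i)).map (· + 2 * i)) := by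
  intro k
  refine ⟨fun i hi₁ hi₂ => ⟨length_W _, ?_, ?_⟩, fun u hu hin hnot => ?_⟩
  · exact (append_self_infix_W_iff (by simp [W_ne_nil]) _).mpr ⟨i, k - 2 * i, hi₁, by omega, rfl⟩
  · rw [append_self_infix_W_iff (by simp [W_ne_nil])]
    rintro ⟨i', b, -, hb, h⟩
    obtain ⟨hi, rfl⟩ := map_add_W_inj.mp h
    omega
  · obtain ⟨i, b, hi, hb, rfl⟩ := (append_self_infix_W_iff hu _).mp hin
    have hk : ¬ b + 2 * i + 1 ≤ k := fun h =>
      hnot ((append_self_infix_W_iff hu _).mpr ⟨i, b, hi, h, rfl⟩)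
    obtain rfl : b = k - 2 * i := by omega
    exact ⟨i, hi, by omega, rfl⟩
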